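/- Converse bound for Stein-type exponent: let ρ_n be density operators and σ_n positive semidefinite operators on Hilbert spaces H_n, and let S_n(a) be the likelihood tests with error probabilities α_n(a), β_n(a). If a sequence of tests T_n satisfies limsup α_n[T_n] ≤ ε and there is a real a with limsup α_n(a) > ε, then liminf −(1/n) log β_n[T_n] ≤ a. Consequently B(ε) := sup over tests with limsup α ≤ ε of liminf −(1/n) log β is at most inf{ a : limsup α_n(a) > ε }. -/

import Mathlib

open scoped ComplexOrder
open Filter

/-- The spectral projection of a matrix onto the direct sum of its eigenspaces
corresponding to strictly positive eigenvalues (defined to be `0` if the matrix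
is not Hermitian). -/
noncomputable def posProj {m : Type*} [Fintype m] [DecidableEq m]
    (A : Matrix m m ℂ) : Matrix m m ℂ :=
  if hA : A.IsHermitian then
    (hA.eigenvectorUnitary : Matrix m m ℂ) *
      Matrix.diagonal (fun i => if 0 < hA.eigenvalues i then (1 : ℂ) else 0) *
      star (hA.eigenvectorUnitary : Matrix m m ℂ)
  else 0

/-- The liminf exponential rate `liminf -(1/n) log p n`, with the convention
that the exponent is `+∞` when `p n = 0`. -/
noncomputable def liminfExpRate (p : ℕ → ℝ) : EReal :=
  Filter.liminf (fun n => if p n = 0 then (⊤ : EReal)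
    else ((-(1 / (n : ℝ)) * Real.log (p n) : ℝ) : EReal)) Filter.atTop

/-!
The likelihood-ratio test `posProj (ρ - c • σ)` maximises `Tr((ρ - c σ) T)` over all tests
`0 ≤ T ≤ 1` (in the eigenbasis of `ρ - c σ` this is a weighted sum of diagonal entries in
`[0, 1]`). With `c = exp (n a)` this is the Neyman–Pearson inequality
`αₙ(a) + e^{na} βₙ(a) ≤ αₙ[Tₙ] + e^{na} βₙ[Tₙ]`, so `e^{na} βₙ[Tₙ] ≥ αₙ(a) - αₙ[Tₙ]`.
Since `limsup αₙ[Tₙ] ≤ ε < limsup αₙ(a)`, the right side exceeds a fixed `δ > 0` infinitely often,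
whence `-(1/n) log βₙ[Tₙ] ≤ a - (log δ)/n` infinitely often.
-/

namespace Matrix

theorem IsHermitian.sub_ofReal_smul {m : Type*} {ρ σ : Matrix m m ℂ} (hρ : ρ.IsHermitian)
    (hσ : σ.IsHermitian) (c : ℝ) : (ρ - (c : ℂ) • σ).IsHermitian :=
  hρ.sub (hσ.smul (Complex.conj_ofReal c))

theorem re_diag_le_one_of_posSemidef_one_sub {m : Type*} [DecidableEq m] {T : Matrix m m ℂ}
    (hT : (1 - T).PosSemidef) (i : m) : (T i i).re ≤ 1 := by
  have := (Complex.nonneg_iff.mp (hT.diag_nonneg (i := i))).1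
  simp only [sub_apply, one_apply_eq, Complex.sub_re, Complex.one_re] at this
  linarith

variable {m : Type*} [Fintype m] [DecidableEq m]

theorem PosSemidef.re_trace_mul_nonneg {A B : Matrix m m ℂ} (hA : A.PosSemidef)
    (hB : B.PosSemidef) : 0 ≤ (A * B).trace.re := by
  open scoped MatrixOrder in
  obtain ⟨C, rfl⟩ := CStarAlgebra.nonneg_iff_eq_star_mul_self.mp hA.nonneg
  rw [star_eq_conjTranspose, ← trace_mul_cycle]
  exact (Complex.nonneg_iff.mp (hB.mul_mul_conjTranspose_same C).trace_nonneg).1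

theorem PosSemidef.re_trace_mul_le_one {ρ P : Matrix m m ℂ} (hρ : ρ.PosSemidef)
    (hρ1 : ρ.trace = 1) (hP1 : (1 - P).PosSemidef) : (ρ * P).trace.re ≤ 1 := by
  have := hρ.re_trace_mul_nonneg hP1
  rw [Matrix.mul_sub, Matrix.mul_one, trace_sub, hρ1, Complex.sub_re, Complex.one_re] at this
  linarith

theorem PosSemidef.one_sub_star_mul_mul_unitary {T : Matrix m m ℂ} (hT : (1 - T).PosSemidef)
    (U : unitary (Matrix m m ℂ)) : (1 - star (U : Matrix m m ℂ) * T * U).PosSemidef := by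
  have h := hT.conjTranspose_mul_mul_same (U : Matrix m m ℂ)
  rwa [Matrix.mul_sub, Matrix.sub_mul, Matrix.mul_one, ← star_eq_conjTranspose,
    Unitary.coe_star_mul_self] at h

theorem IsHermitian.trace_mul_eq_sum {A : Matrix m m ℂ} (hA : A.IsHermitian) (X : Matrix m m ℂ) :
    (A * X).trace = ∑ i, (hA.eigenvalues i : ℂ) *
      (star (hA.eigenvectorUnitary : Matrix m m ℂ) * X * hA.eigenvectorUnitary) i i := by
  conv_lhs => rw [hA.spectral_theorem, Unitary.conjStarAlgAut_apply]
  rw [Matrix.mul_assoc, Matrix.mul_assoc, trace_mul_comm, Matrix.mul_assoc, trace]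
  simp only [diag_apply, diagonal_mul, Function.comp_apply, Matrix.mul_assoc]
  rfl

theorem posProj_posSemidef (A : Matrix m m ℂ) : (posProj A).PosSemidef := by
  rw [posProj]
  split_ifs with hA
  · rw [star_eq_conjTranspose]
    exact (PosSemidef.diagonal fun i => by positivity).mul_mul_conjTranspose_same _
  · exact PosSemidef.zero

theorem IsHermitian.one_sub_posProj_posSemidef {A : Matrix m m ℂ} (hA : A.IsHermitian) :
    (1 - posProj A).PosSemidef := by
  set U : Matrix m m ℂ := (hA.eigenvectorUnitary : Matrix m m ℂ)
  have hUU : U * star U = 1 := Unitary.coe_mul_star_self _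
  have h : 1 - posProj A =
      U * diagonal (fun i => 1 - if 0 < hA.eigenvalues i then (1 : ℂ) else 0) * star U := by
    rw [posProj, dif_pos hA, ← diagonal_one, ← diagonal_sub, diagonal_one, Matrix.mul_sub,
      Matrix.sub_mul, Matrix.mul_one, hUU]
  rw [h, star_eq_conjTranspose]
  refine (PosSemidef.diagonal fun i => ?_).mul_mul_conjTranspose_same _
  split_ifs <;> simp

theorem IsHermitian.star_mul_posProj_mul {A : Matrix m m ℂ} (hA : A.IsHermitian) :
    star (hA.eigenvectorUnitary : Matrix m m ℂ) * posProj A * hA.eigenvectorUnitary =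
      diagonal (fun i => if 0 < hA.eigenvalues i then (1 : ℂ) else 0) := by
  rw [posProj, dif_pos hA]
  simp only [Matrix.mul_assoc, Unitary.coe_star_mul_self, Matrix.mul_one]
  rw [← Matrix.mul_assoc, Unitary.coe_star_mul_self, Matrix.one_mul]

theorem IsHermitian.re_trace_mul_le_re_trace_mul_posProj {A T : Matrix m m ℂ}
    (hA : A.IsHermitian) (hT : T.PosSemidef) (hT1 : (1 - T).PosSemidef) :
    (A * T).trace.re ≤ (A * posProj A).trace.re := by
  set U := hA.eigenvectorUnitary
  have hS : (star (U : Matrix m m ℂ) * T * U).PosSemidef := by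
    simpa only [star_eq_conjTranspose] using hT.conjTranspose_mul_mul_same (U : Matrix m m ℂ)
  have hS1 := hT1.one_sub_star_mul_mul_unitary U
  rw [hA.trace_mul_eq_sum, hA.trace_mul_eq_sum, hA.star_mul_posProj_mul, Complex.re_sum,
    Complex.re_sum]
  refine Finset.sum_le_sum fun i _ => ?_
  rw [Complex.re_ofReal_mul, Complex.re_ofReal_mul, diagonal_apply_eq]
  split_ifs with h
  · simpa using mul_le_mul_of_nonneg_left (re_diag_le_one_of_posSemidef_one_sub hS1 i) h.le
  · simpa using mul_nonpos_of_nonpos_of_nonneg (not_lt.mp h)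
      (Complex.nonneg_iff.mp (hS.diag_nonneg (i := i))).1

theorem neyman_pearson {ρ σ T : Matrix m m ℂ} (hρ : ρ.IsHermitian) (hσ : σ.IsHermitian)
    (hT : T.PosSemidef) (hT1 : (1 - T).PosSemidef) (c : ℝ) :
    (1 - (ρ * posProj (ρ - (c : ℂ) • σ)).trace.re) +
        c * (σ * posProj (ρ - (c : ℂ) • σ)).trace.re ≤
      (1 - (ρ * T).trace.re) + c * (σ * T).trace.re := by
  have key := (hρ.sub_ofReal_smul hσ c).re_trace_mul_le_re_trace_mul_posProj hT hT1
  simp only [Matrix.sub_mul, trace_sub, Matrix.smul_mul, trace_smul, Complex.sub_re,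
    smul_eq_mul, Complex.re_ofReal_mul] at key
  linarith

end Matrix

theorem Filter.exists_frequently_le_sub_of_limsup_lt_limsup {ι : Type*} {l : Filter ι}
    {u v : ι → ℝ} (hu : IsCoboundedUnder (· ≤ ·) l u) (hv : IsBoundedUnder (· ≤ ·) l v)
    (h : limsup v l < limsup u l) : ∃ δ > 0, ∃ᶠ i in l, δ ≤ u i - v i := by
  obtain ⟨x, hvx, hxu⟩ := exists_between h
  obtain ⟨y, hxy, hyu⟩ := exists_between hxu
  refine ⟨y - x, by linarith, ?_⟩
  refine ((frequently_lt_of_lt_limsup hu hyu).and_eventually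
    (eventually_lt_of_limsup_lt hvx hv)).mono fun i hi => ?_
  linarith [hi.1, hi.2]

theorem liminfExpRate_le_of_frequently_le {p : ℕ → ℝ} {δ a : ℝ} (hδ : 0 < δ)
    (h : ∃ᶠ n : ℕ in atTop, δ ≤ Real.exp (n * a) * p n) : liminfExpRate p ≤ a := by
  refine EReal.le_of_forall_lt_iff_le.mp fun b hab => ?_
  have hab : a < b := by exact_mod_cast hab
  have hlarge : ∀ᶠ n : ℕ in atTop, 0 < (n : ℝ) ∧ -Real.log δ ≤ (b - a) * n :=
    (tendsto_natCast_atTop_atTop.eventually_gt_atTop 0).and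
      ((tendsto_natCast_atTop_atTop.const_mul_atTop (sub_pos.mpr hab)).eventually_ge_atTop _)
  refine liminf_le_of_frequently_le' ((h.and_eventually hlarge).mono ?_)
  rintro n ⟨hδn, hn, hlog⟩
  have hp : 0 < p n := pos_of_mul_pos_right (hδ.trans_le hδn) (Real.exp_pos _).le
  have hlogp : Real.log δ ≤ n * a + Real.log (p n) := by
    simpa [Real.log_mul, Real.log_exp, hp.ne'] using Real.log_le_log hδ hδn
  rw [if_neg hp.ne', EReal.coe_le_coe_iff, neg_mul, one_div_mul_eq_div, neg_le, le_div_iff₀ hn]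
  linarith

theorem liminfExpRate_le_of_limsup_lt_limsup {d : ℕ → Type*} [∀ n, Fintype (d n)]
    [∀ n, DecidableEq (d n)] {ρ σ T : ∀ n, Matrix (d n) (d n) ℂ}
    (hρ : ∀ n, (ρ n).PosSemidef) (hρ1 : ∀ n, (ρ n).trace = 1) (hσ : ∀ n, (σ n).PosSemidef)
    (hT : ∀ n, (T n).PosSemidef) (hT1 : ∀ n, (1 - T n).PosSemidef) {a : ℝ}
    (hlt : limsup (fun n => 1 - (ρ n * T n).trace.re) atTop <
      limsup (fun n => 1 - (ρ n * posProj (ρ n - (Real.exp (n * a) : ℂ) • σ n)).trace.re) atTop) :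
    liminfExpRate (fun n => (σ n * T n).trace.re) ≤ a := by
  have hαP : ∀ n, 0 ≤ 1 - (ρ n * posProj (ρ n - (Real.exp (n * a) : ℂ) • σ n)).trace.re :=
    fun n => sub_nonneg.mpr <|
    (hρ n).re_trace_mul_le_one (hρ1 n) ((hρ n).isHermitian.sub_ofReal_smul (hσ n).isHermitian
      (Real.exp (n * a))).one_sub_posProj_posSemidef
  have hαT : ∀ n, 1 - (ρ n * T n).trace.re ≤ 1 := fun n =>
    sub_le_self _ ((hρ n).re_trace_mul_nonneg (hT n))
  obtain ⟨δ, hδ, hfreq⟩ := Filter.exists_frequently_le_sub_of_limsup_lt_limsup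
    (isCoboundedUnder_le_of_le atTop hαP) (isBoundedUnder_of ⟨1, hαT⟩) hlt
  refine liminfExpRate_le_of_frequently_le hδ (hfreq.mono fun n hn => hn.trans ?_)
  have hNP := Matrix.neyman_pearson (hρ n).isHermitian (hσ n).isHermitian (hT n) (hT1 n)
    (Real.exp (n * a))
  have hβP := mul_nonneg (Real.exp_pos (n * a)).le
    ((hσ n).re_trace_mul_nonneg (Matrix.posProj_posSemidef (ρ n - (Real.exp (n * a) : ℂ) • σ n)))
  linarith

theorem stein_converse_general {d : ℕ → Type*} [∀ n, Fintype (d n)] [∀ n, DecidableEq (d n)]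
    (ρ σ : ∀ n, Matrix (d n) (d n) ℂ)
    (hρ : ∀ n, (ρ n).PosSemidef) (hρ1 : ∀ n, (ρ n).trace = 1)
    (hσ : ∀ n, (σ n).PosSemidef)
    (ε : ℝ) :
    (∀ T : ∀ n, Matrix (d n) (d n) ℂ,
      (∀ n, (T n).PosSemidef) → (∀ n, (1 - T n).PosSemidef) →
      Filter.limsup (fun n => (1 - ((ρ n) * (T n)).trace.re : ℝ)) Filter.atTop ≤ ε →
      ∀ a : ℝ,
        ε < Filter.limsup (fun n =>
            (1 - ((ρ n) * posProj (ρ n - (Real.exp (n * a) : ℂ) • σ n)).trace.re : ℝ))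
          Filter.atTop →
        liminfExpRate (fun n => ((σ n) * (T n)).trace.re) ≤ (a : EReal)) ∧
    sSup {z : EReal | ∃ T : ∀ n, Matrix (d n) (d n) ℂ,
        (∀ n, (T n).PosSemidef) ∧ (∀ n, (1 - T n).PosSemidef) ∧
        Filter.limsup (fun n => (1 - ((ρ n) * (T n)).trace.re : ℝ)) Filter.atTop ≤ ε ∧
        z = liminfExpRate (fun n => ((σ n) * (T n)).trace.re)} ≤
      sInf {x : EReal | ∃ a : ℝ, x = (a : EReal) ∧
        ε < Filter.limsup (fun n =>
            (1 - ((ρ n) * posProj (ρ n - (Real.exp (n * a) : ℂ) • σ n)).trace.re : ℝ))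
          Filter.atTop} := by
  refine ⟨fun T hT hT1 hlim a hgt =>
    liminfExpRate_le_of_limsup_lt_limsup hρ hρ1 hσ hT hT1 (hlim.trans_lt hgt), sSup_le ?_⟩
  rintro _ ⟨T, hT, hT1, hlim, rfl⟩
  refine le_sInf ?_
  rintro _ ⟨a, rfl, hgt⟩
  exact liminfExpRate_le_of_limsup_lt_limsup hρ hρ1 hσ hT hT1 (hlim.trans_lt hgt)

/-- Converse bound for the Stein-type exponent: any test sequence with
`limsup αₙ[Tₙ] ≤ ε` has second-kind exponent at most `a` whenever
`limsup αₙ(a) > ε`; consequently `B(ε) ≤ inf {a | limsup αₙ(a) > ε}`. -/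
theorem stein_converse {d : ℕ → Type*} [∀ n, Fintype (d n)] [∀ n, DecidableEq (d n)]
    (ρ σ : ∀ n, Matrix (d n) (d n) ℂ)
    (hρ : ∀ n, (ρ n).PosSemidef) (hρ1 : ∀ n, (ρ n).trace = 1)
    (hσ : ∀ n, (σ n).PosSemidef)
    (ε : ℝ) (hε : ε ∈ Set.Icc (0 : ℝ) 1) :
    (∀ T : ∀ n, Matrix (d n) (d n) ℂ,
      (∀ n, (T n).PosSemidef) → (∀ n, (1 - T n).PosSemidef) →
      Filter.limsup (fun n => (1 - ((ρ n) * (T n)).trace.re : ℝ)) Filter.atTop ≤ ε →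
      ∀ a : ℝ,
        ε < Filter.limsup (fun n =>
            (1 - ((ρ n) * posProj (ρ n - (Real.exp (n * a) : ℂ) • σ n)).trace.re : ℝ))
          Filter.atTop →
        liminfExpRate (fun n => ((σ n) * (T n)).trace.re) ≤ (a : EReal)) ∧
    sSup {z : EReal | ∃ T : ∀ n, Matrix (d n) (d n) ℂ,
        (∀ n, (T n).PosSemidef) ∧ (∀ n, (1 - T n).PosSemidef) ∧
        Filter.limsup (fun n => (1 - ((ρ n) * (T n)).trace.re : ℝ)) Filter.atTop ≤ ε ∧
        z = liminfExpRate (fun n => ((σ n) * (T n)).trace.re)} ≤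
      sInf {x : EReal | ∃ a : ℝ, x = (a : EReal) ∧
        ε < Filter.limsup (fun n =>
            (1 - ((ρ n) * posProj (ρ n - (Real.exp (n * a) : ℂ) • σ n)).trace.re : ℝ))
          Filter.atTop} :=
  stein_converse_general ρ σ hρ hρ1 hσ ε
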